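/- arXiv:math/0002054 — 7 statements merged into one kernel-verified Lean document; each statement's English description precedes it below -/
import Mathlib

section
/- Let p be a prime, A an F-finite Noetherian normal integral domain of characteristic p, and x ∈ A a nonzero element. If the pair (A, div(x)) is divisorially F-regular — i.e., for every c ∈ A not contained in any minimal prime ideal over xA there exists an integer e ≥ 1 such that c·x^{p^e−1} admits a p^e-splitting in A — then the pair (A, div(x)) is F-pure, i.e., for every integer e ≥ 1 the element x^{p^e−1} admits a p^e-splitting in A. -/
/-- `c` admits a `p^e`-splitting in `A`: there is an additive map `φ : A → A` with
`φ (a^(p^e) * b) = a * φ b` for all `a b` and `φ c = 1`. -/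
def AdmitsSplitting (p e : ℕ) {A : Type*} [CommRing A] (c : A) : Prop :=
  ∃ φ : A →+ A, (∀ a b : A, φ (a ^ p ^ e * b) = a * φ b) ∧ φ c = 1

/-- `A` is F-finite: `A` is a finitely generated module over its subring of `p`-th powers. -/
def FFinite (p : ℕ) (A : Type*) [CommRing A] : Prop :=
  ∃ (n : ℕ) (v : Fin n → A), ∀ a : A, ∃ c : Fin n → A, a = ∑ i, c i ^ p * v i

lemma split_comp {p : ℕ} (hp : 1 ≤ p) {A : Type*} [CommRing A] {x : A} {e f : ℕ}
    (he : AdmitsSplitting p e (x ^ (p ^ e - 1)))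
    (hf : AdmitsSplitting p f (x ^ (p ^ f - 1))) :
    AdmitsSplitting p (e + f) (x ^ (p ^ (e + f) - 1)) := by
  obtain ⟨φ, hφ, hφx⟩ := he
  obtain ⟨ψ, hψ, hψx⟩ := hf
  refine ⟨φ.comp ψ, ?_, ?_⟩
  · intro a b
    simp only [AddMonoidHom.comp_apply]
    rw [pow_add, pow_mul, hψ, hφ]
  · simp only [AddMonoidHom.comp_apply]
    have h1 : 1 ≤ p ^ e := Nat.one_le_pow _ _ hp
    have h2 : 1 ≤ p ^ f := Nat.one_le_pow _ _ hp
    have hm : p ^ e * p ^ f = p ^ (e + f) := (pow_add p e f).symm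
    have hle : p ^ f ≤ p ^ e * p ^ f := Nat.le_mul_of_pos_left _ h1
    have hexp : p ^ (e + f) - 1 = (p ^ e - 1) * p ^ f + (p ^ f - 1) := by
      rw [Nat.sub_mul, one_mul]; omega
    rw [hexp, pow_add, pow_mul, hψ, hψx, mul_one, hφx]

lemma split_down {p : ℕ} (hp : p.Prime) {A : Type*} [CommRing A] [CharP A p] {x : A}
    {f n : ℕ} (hfn : f ≤ n) (hn : AdmitsSplitting p n (x ^ (p ^ n - 1))) :
    AdmitsSplitting p f (x ^ (p ^ f - 1)) := by
  obtain ⟨ψ, hψ, hψx⟩ := hn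
  haveI : Fact p.Prime := ⟨hp⟩
  set g := n - f with hg
  refine ⟨AddMonoidHom.mk' (fun c => ψ (x ^ (p ^ g - 1) * c ^ p ^ g)) ?_, ?_, ?_⟩
  · intro a b
    beta_reduce
    rw [add_pow_char_pow, mul_add, map_add]
  · intro a b
    simp only [AddMonoidHom.mk'_apply]
    have key : x ^ (p ^ g - 1) * (a ^ p ^ f * b) ^ p ^ g
        = a ^ p ^ n * (x ^ (p ^ g - 1) * b ^ p ^ g) := by
      have hfg : f + g = n := by omega
      rw [mul_pow, ← pow_mul, ← pow_add, hfg]; ring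
    rw [key, hψ]
  · simp only [AddMonoidHom.mk'_apply]
    rw [← pow_mul, ← pow_add]
    have h1 : 1 ≤ p ^ g := Nat.one_le_pow _ _ hp.pos
    have h2 : 1 ≤ p ^ f := Nat.one_le_pow _ _ hp.pos
    have hm : p ^ f * p ^ g = p ^ n := by rw [← pow_add]; congr 1; omega
    have hle : p ^ g ≤ p ^ f * p ^ g := Nat.le_mul_of_pos_left _ h2
    have hexp : p ^ g - 1 + (p ^ f - 1) * p ^ g = p ^ n - 1 := by
      rw [Nat.sub_mul, one_mul]; omega
    rw [hexp, hψx]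

/-- If the pair `(A, div x)` is divisorially F-regular, then it is F-pure. -/
theorem stmt_1 (p : ℕ) (hp : p.Prime) (A : Type*) [CommRing A] [IsDomain A]
    [IsNoetherianRing A] [IsIntegrallyClosed A] [CharP A p]
    (hFF : FFinite p A) (x : A) (hx : x ≠ 0)
    (hDFR : ∀ c : A, (∀ P ∈ (Ideal.span {x}).minimalPrimes, c ∉ P) →
      ∃ e : ℕ, 1 ≤ e ∧ AdmitsSplitting p e (c * x ^ (p ^ e - 1))) :
    ∀ e : ℕ, 1 ≤ e → AdmitsSplitting p e (x ^ (p ^ e - 1)) := by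
  have h1 : ∀ P ∈ (Ideal.span {x}).minimalPrimes, (1 : A) ∉ P := by
    intro P hP hone
    exact hP.1.1.ne_top (Ideal.eq_top_of_isUnit_mem _ hone isUnit_one)
  obtain ⟨e₀, he₀, hsp⟩ := hDFR 1 h1
  rw [one_mul] at hsp
  have hmult : ∀ k : ℕ, AdmitsSplitting p ((k + 1) * e₀) (x ^ (p ^ ((k + 1) * e₀) - 1)) := by
    intro k
    induction k with
    | zero => simpa using hsp
    | succ k ih =>
      have h : (k + 1 + 1) * e₀ = (k + 1) * e₀ + e₀ := by ring
      rw [h]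
      exact split_comp hp.one_lt.le ih hsp
  intro e he
  refine split_down hp ?_ (hmult e)
  calc e ≤ e + 1 := Nat.le_succ e
    _ ≤ (e + 1) * e₀ := Nat.le_mul_of_pos_right _ he₀
end

section
/- Let p be a prime, A an F-finite Noetherian normal integral domain of characteristic p, g ∈ A a nonzero element whose divisor on Spec A is reduced, and t ≥ 0 a rational number. Then the pair (A, t·div(g)) is strongly F-regular — i.e., for every nonzero c ∈ A there exists an integer e ≥ 1 such that c·g^{⌊t(p^e−1)⌋} admits a p^e-splitting in A — if and only if for every nonzero c ∈ A there exists e₀ such that for all integers e ≥ e₀ the element c·g^{⌊t·p^e⌋} admits a p^e-splitting in A. -/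
/-- The divisor of `g` on `Spec A` is reduced: at every height-one prime `P` containing `g`
(equivalently, every minimal prime over `gA`), the image of `g` in the local ring `A_P`
has valuation `1`, i.e. it lies outside the square of the maximal ideal. -/
def HasReducedDivisor {A : Type*} [CommRing A] (g : A) : Prop :=
  ∀ (P : Ideal A) [P.IsPrime], P ∈ (Ideal.span {g}).minimalPrimes →
    algebraMap A (Localization.AtPrime P) g ∉
      (IsLocalRing.maximalIdeal (Localization.AtPrime P)) ^ 2

open Filter Finset

section

variable {A : Type*} [CommRing A] {p e f : ℕ} {c d g : A}

theorem admitsSplitting_zero_one : AdmitsSplitting p 0 (1 : A) :=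
  ⟨AddMonoidHom.id A, fun a b => by simp, rfl⟩

namespace AdmitsSplitting

theorem of_mul_right (h : AdmitsSplitting p e (c * d)) : AdmitsSplitting p e c := by
  obtain ⟨φ, hφ, hφc⟩ := h
  refine ⟨φ.comp (AddMonoidHom.mulLeft d), fun a b => ?_, ?_⟩
  · simp only [AddMonoidHom.coe_comp, Function.comp_apply, AddMonoidHom.coe_mulLeft]
    rw [mul_left_comm, hφ]
  · simpa [mul_comm d c] using hφc

theorem comp (hc : AdmitsSplitting p e c) (hd : AdmitsSplitting p f d) :
    AdmitsSplitting p (e + f) (c ^ p ^ f * d) := by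
  obtain ⟨φ, hφ, hφc⟩ := hc
  obtain ⟨ψ, hψ, hψd⟩ := hd
  refine ⟨φ.comp ψ, fun a b => ?_, ?_⟩
  · simp only [AddMonoidHom.coe_comp, Function.comp_apply]
    rw [pow_add, pow_mul, hψ, hφ]
  · simp only [AddMonoidHom.coe_comp, Function.comp_apply]
    rw [hψ, hψd, mul_one, hφc]

/-- Composing with `x ↦ d * x ^ p ^ r` descends a splitting `r` levels. -/
theorem of_pow_mul [ExpChar A p] {r : ℕ} (h : AdmitsSplitting p (e + r) (c ^ p ^ r * d)) :
    AdmitsSplitting p e c := by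
  obtain ⟨φ, hφ, hφc⟩ := h
  refine ⟨φ.comp ((AddMonoidHom.mulLeft d).comp (iterateFrobenius A p r).toAddMonoidHom),
    fun a b => ?_, ?_⟩
  · simp only [AddMonoidHom.coe_comp, Function.comp_apply, AddMonoidHom.coe_mulLeft,
      RingHom.toAddMonoidHom_eq_coe, AddMonoidHom.coe_coe, iterateFrobenius_def]
    rw [← hφ, mul_pow, ← pow_mul, ← pow_add, mul_left_comm]
  · simpa [iterateFrobenius_def, mul_comm d] using hφc

theorem pow_geom_sum (h : AdmitsSplitting p f c) (k : ℕ) :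
    AdmitsSplitting p (k * f) (c ^ ∑ i ∈ range k, (p ^ f) ^ i) := by
  induction k with
  | zero => simpa using admitsSplitting_zero_one
  | succ k ih =>
    simpa only [Nat.succ_mul, geom_sum_succ, pow_add, pow_one, pow_mul, mul_comm (p ^ f)] using
      ih.comp h

theorem mul_pow_of_le {k n : ℕ} (h : AdmitsSplitting p e (c * g ^ n))
    (hkn : k ≤ n) : AdmitsSplitting p e (c * g ^ k) := by
  rw [← Nat.add_sub_cancel' hkn, pow_add, ← mul_assoc] at h
  exact h.of_mul_right

theorem pow_div_pow [ExpChar A p] {r N : ℕ}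
    (h : AdmitsSplitting p (e + r) (g ^ N)) : AdmitsSplitting p e (g ^ (N / p ^ r)) := by
  rw [← Nat.div_add_mod N (p ^ r), pow_add, mul_comm (p ^ r), pow_mul] at h
  exact h.of_pow_mul

end AdmitsSplitting

theorem exists_admitsSplitting_pow_lt [ExpChar A p] (hp : 1 < p) {m : ℕ} (hf : 1 ≤ f)
    (h : AdmitsSplitting p f (g ^ m)) (d : ℕ) :
    ∃ n : ℕ, AdmitsSplitting p d (g ^ n) ∧
      (m : ℚ) * ((p : ℚ) ^ d - 1) < ((n : ℚ) + 1) * ((p : ℚ) ^ f - 1) := by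
  set r := d * f - d
  have hlevel : d * f = d + r := by have := Nat.le_mul_of_pos_right d hf; omega
  have hiter := h.pow_geom_sum d
  rw [← pow_mul, hlevel] at hiter
  set N := m * ∑ i ∈ range d, (p ^ f) ^ i
  refine ⟨N / p ^ r, hiter.pow_div_pow, ?_⟩
  have hpr : (1 : ℚ) ≤ (p : ℚ) ^ r := one_le_pow₀ (by exact_mod_cast hp.le)
  have hq : (1 : ℚ) < (p : ℚ) ^ f := one_lt_pow₀ (by exact_mod_cast hp) (by omega)
  have hN : (N : ℚ) * ((p : ℚ) ^ f - 1) = m * ((p : ℚ) ^ d * (p : ℚ) ^ r - 1) := by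
    rw [← pow_add, ← hlevel, mul_comm d, pow_mul]
    simp only [N, Nat.cast_mul, Nat.cast_sum, Nat.cast_pow, mul_assoc, geom_sum_mul]
  have hdiv : (N : ℚ) < (p : ℚ) ^ r * ((N / p ^ r : ℕ) + 1) := by
    exact_mod_cast Nat.lt_mul_div_succ N (pow_pos (show 0 < p by omega) r)
  refine lt_of_mul_lt_mul_right ?_ (zero_le_one.trans hpr)
  calc (m : ℚ) * ((p : ℚ) ^ d - 1) * (p : ℚ) ^ r
      ≤ N * ((p : ℚ) ^ f - 1) := by rw [hN]; nlinarith
    _ < (p : ℚ) ^ r * ((N / p ^ r : ℕ) + 1) * ((p : ℚ) ^ f - 1) := by gcongr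
    _ = _ := by ring

theorem eventually_admitsSplitting_pow_ge [ExpChar A p] (hp : 1 < p) {m : ℕ} {t : ℚ}
    (hf : 1 ≤ f) (h : AdmitsSplitting p f (g ^ m)) (hm : t * ((p : ℚ) ^ f - 1) < m) :
    ∀ᶠ d in atTop, ∃ n : ℕ, AdmitsSplitting p d (g ^ n) ∧ t * (p : ℚ) ^ d ≤ n := by
  have hp' : (1 : ℚ) < p := by exact_mod_cast hp
  have hgrow : Tendsto (fun d : ℕ => (m - t * ((p : ℚ) ^ f - 1)) * (p : ℚ) ^ d) atTop atTop :=
    (tendsto_pow_atTop_atTop_of_one_lt hp').const_mul_atTop (sub_pos.mpr hm)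
  filter_upwards [hgrow.eventually_ge_atTop (m + (p : ℚ) ^ f - 1)] with d hd
  obtain ⟨n, hn, hbound⟩ := exists_admitsSplitting_pow_lt hp hf h d
  refine ⟨n, hn, ?_⟩
  have hq : (0 : ℚ) < (p : ℚ) ^ f - 1 := sub_pos.mpr (one_lt_pow₀ hp' (by omega))
  nlinarith

theorem AdmitsSplitting.eventually_mul_pow_floor {e₁ : ℕ} {t : ℚ}
    (hc : AdmitsSplitting p e₁ c)
    (hg : ∀ᶠ d in atTop, ∃ n : ℕ, AdmitsSplitting p d (g ^ n) ∧ t * (p : ℚ) ^ d ≤ n) :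
    ∀ᶠ e in atTop, AdmitsSplitting p e (c * g ^ ⌊t * (p : ℚ) ^ e⌋₊) := by
  obtain ⟨d₀, hd₀⟩ := eventually_atTop.mp hg
  refine eventually_atTop.mpr ⟨d₀ + e₁, fun e he => ?_⟩
  obtain ⟨d, rfl⟩ : ∃ d, e = d + e₁ := ⟨e - e₁, by omega⟩
  obtain ⟨n, hn, hbound⟩ := hd₀ d (by omega)
  have hsplit := hn.comp hc
  rw [← pow_mul, mul_comm] at hsplit
  refine hsplit.mul_pow_of_le (Nat.floor_le_of_le ?_)
  calc t * (p : ℚ) ^ (d + e₁) = t * (p : ℚ) ^ d * (p : ℚ) ^ e₁ := by rw [pow_add, mul_assoc]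
    _ ≤ n * (p : ℚ) ^ e₁ := by gcongr
    _ = ((n * p ^ e₁ : ℕ) : ℚ) := by push_cast; rfl

end

theorem stmt_2_general (p : ℕ) (hp : p.Prime) (A : Type*) [CommRing A] [CharP A p]
    (g : A) (hg : g ≠ 0)
    (t : ℚ) (ht : 0 ≤ t) :
    (∀ c : A, c ≠ 0 →
      ∃ e : ℕ, 1 ≤ e ∧ AdmitsSplitting p e (c * g ^ ⌊t * ((p : ℚ) ^ e - 1)⌋₊)) ↔
    (∀ c : A, c ≠ 0 →
      ∃ e₀ : ℕ, ∀ e : ℕ, e₀ ≤ e → AdmitsSplitting p e (c * g ^ ⌊t * (p : ℚ) ^ e⌋₊)) := by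
  have := Fact.mk hp
  constructor
  · intro H c hc
    obtain ⟨f, hf, hgf⟩ := H g hg
    rw [← pow_succ'] at hgf
    have hm : t * ((p : ℚ) ^ f - 1) < (⌊t * ((p : ℚ) ^ f - 1)⌋₊ + 1 : ℕ) := by
      exact_mod_cast Nat.lt_floor_add_one _
    obtain ⟨e₁, -, hce₁⟩ := H c hc
    exact eventually_atTop.mp <| hce₁.of_mul_right.eventually_mul_pow_floor <|
      eventually_admitsSplitting_pow_ge hp.one_lt hf hgf hm
  · intro H c hc
    obtain ⟨e₀, he₀⟩ := H c hc
    refine ⟨max 1 e₀, le_max_left _ _, (he₀ _ (le_max_right _ _)).mul_pow_of_le ?_⟩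
    exact Nat.floor_le_floor (mul_le_mul_of_nonneg_left (sub_le_self _ zero_le_one) ht)

/-- The pair `(A, t·div g)` is strongly F-regular iff for every nonzero `c` the elements
`c * g^⌊t·p^e⌋` admit `p^e`-splittings for all sufficiently large `e`. -/
theorem stmt_2 (p : ℕ) (hp : p.Prime) (A : Type*) [CommRing A] [IsDomain A]
    [IsNoetherianRing A] [IsIntegrallyClosed A] [CharP A p]
    (hFF : FFinite p A) (g : A) (hg : g ≠ 0) (hred : HasReducedDivisor g)
    (t : ℚ) (ht : 0 ≤ t) :
    (∀ c : A, c ≠ 0 →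
      ∃ e : ℕ, 1 ≤ e ∧ AdmitsSplitting p e (c * g ^ ⌊t * ((p : ℚ) ^ e - 1)⌋₊)) ↔
    (∀ c : A, c ≠ 0 →
      ∃ e₀ : ℕ, ∀ e : ℕ, e₀ ≤ e → AdmitsSplitting p e (c * g ^ ⌊t * (p : ℚ) ^ e⌋₊)) :=
  stmt_2_general p hp A g hg t ht
end

section
/- Let k be a perfect field of characteristic p > 0, let d ≥ 1 and let n_1, …, n_s ∈ ℤ^d. Let S = { m ∈ ℤ^d : ⟨m, n_i⟩ ≥ 0 for i = 1, …, s } (the submonoid of lattice points of a rational polyhedral cone), and let A = k[S] be the monoid algebra of S over k. Then A is F-pure: for every integer e ≥ 1 the element 1 admits a p^e-splitting in A. -/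
/-- The submonoid of lattice points of the rational polyhedral cone
`{m : ℤ^d | ⟨m, nᵢ⟩ ≥ 0 for all i}`. -/
def coneMonoid {d s : ℕ} (n : Fin s → Fin d → ℤ) : AddSubmonoid (Fin d → ℤ) where
  carrier := {m | ∀ i, 0 ≤ ∑ j, m j * n i j}
  zero_mem' := by intro i; simp
  add_mem' := by
    intro a b ha hb i
    have h := add_nonneg (ha i) (hb i)
    simpa [add_mul, Finset.sum_add_distrib] using h

namespace AddMonoidAlgebra

variable {R M : Type*} [CommRing R] [AddCommMonoid M] (p e : ℕ) [ExpChar R p] [PerfectRing R p]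
  (hinj : Function.Injective (p ^ e • · : M → M))

/-- With `q = p ^ e`, sends `r • x^(q • m)` to `r^(1/q) • x^m` and kills the monomials whose
exponent is not a `q`-th multiple. -/
noncomputable def frobeniusSplitting : R[M] →+ R[M] :=
  coeffAddEquiv.symm.toAddMonoidHom.comp <|
    (Finsupp.mapRange.addMonoidHom (iterateFrobeniusEquiv R p e).symm.toAddMonoidHom).comp <|
      (Finsupp.comapDomain.addMonoidHom hinj).comp coeffAddEquiv.toAddMonoidHom

lemma coeff_frobeniusSplitting (x : R[M]) (m : M) :
    (frobeniusSplitting p e hinj x).coeff m =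
      (iterateFrobeniusEquiv R p e).symm (x.coeff (p ^ e • m)) :=
  rfl

lemma frobeniusSplitting_one : frobeniusSplitting p e hinj (1 : R[M]) = 1 := by
  ext m
  rw [coeff_frobeniusSplitting, one_def, coeff_single]
  obtain rfl | hm := eq_or_ne m 0
  · simp
  · have hqm : p ^ e • m ≠ 0 := fun h ↦ hm (hinj (by simpa using h))
    rw [Finsupp.single_eq_of_ne hqm, Finsupp.single_eq_of_ne hm, map_zero]

lemma frobeniusSplitting_single_pow_mul [IsCancelAdd M]
    (hsat : ∀ m w u : M, p ^ e • m + w = p ^ e • u → ∃ v, w = p ^ e • v)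
    (m : M) (r : R) (b : R[M]) :
    frobeniusSplitting p e hinj (single m r ^ p ^ e * b) =
      single m r * frobeniusSplitting p e hinj b := by
  ext u
  rw [single_pow, coeff_frobeniusSplitting]
  by_cases hu : ∃ v, m + v = u
  · obtain ⟨v, rfl⟩ := hu
    rw [smul_add, coeff_single_mul_add, coeff_single_mul_add, map_mul,
      ← iterateFrobeniusEquiv_def, RingEquiv.symm_apply_apply, coeff_frobeniusSplitting]
  · push Not at hu
    rw [coeff_single_mul_of_forall_add_ne _ _ hu, coeff_single_mul_of_forall_add_ne, map_zero]
    intro w hw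
    obtain ⟨v, rfl⟩ := hsat m w u hw
    exact hu v (hinj (by simpa [smul_add] using hw))

theorem admitsSplitting_one [IsCancelAdd M] (hinj : Function.Injective (p ^ e • · : M → M))
    (hsat : ∀ m w u : M, p ^ e • m + w = p ^ e • u → ∃ v, w = p ^ e • v) :
    AdmitsSplitting p e (1 : R[M]) := by
  have : ExpChar R[M] p := ExpChar.of_injective_algebraMap' R p
  refine ⟨frobeniusSplitting p e hinj, fun a b ↦ ?_, frobeniusSplitting_one p e hinj⟩
  induction a using AddMonoidAlgebra.induction with
  | zero => simp [zero_pow (pow_ne_zero e (expChar_ne_zero R p))]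
  | single_add m r a _ _ ih =>
    rw [add_pow_expChar_pow, add_mul, map_add, ih, add_mul,
      frobeniusSplitting_single_pow_mul p e hinj hsat]

end AddMonoidAlgebra

namespace AddSubmonoid

variable {G : Type*} [AddCommGroup G] (S : AddSubmonoid G) {q : ℕ}

lemma nsmul_injective [IsAddTorsionFree G] (hq : q ≠ 0) : Function.Injective (q • · : S → S) :=
  fun _ _ h ↦ Subtype.ext (nsmul_right_injective hq (congrArg Subtype.val h))

lemma exists_eq_nsmul_of_nsmul_add_eq_nsmul (hS : ∀ g : G, q • g ∈ S → g ∈ S) {m w u : S}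
    (h : q • m + w = q • u) : ∃ v, w = q • v := by
  have hw : (w : G) = q • ((u : G) - m) := by
    rw [smul_sub, eq_sub_iff_add_eq']
    simpa using congrArg Subtype.val h
  exact ⟨⟨_, hS _ (hw ▸ w.2)⟩, Subtype.ext hw⟩

end AddSubmonoid

lemma mem_coneMonoid_of_nsmul_mem {d s : ℕ} (n : Fin s → Fin d → ℤ) {q : ℕ} (hq : q ≠ 0)
    {g : Fin d → ℤ} (hg : q • g ∈ coneMonoid n) : g ∈ coneMonoid n := by
  intro i
  have hgi := hg i
  simp only [Pi.smul_apply, nsmul_eq_mul, mul_assoc, ← Finset.mul_sum] at hgi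
  exact nonneg_of_mul_nonneg_right hgi (by positivity)

theorem stmt_5_general (p : ℕ) (k : Type*) [Field k]
    [ExpChar k p] [PerfectRing k p]
    (d s : ℕ) (n : Fin s → Fin d → ℤ) :
    ∀ e : ℕ, 1 ≤ e → AdmitsSplitting p e (1 : AddMonoidAlgebra k (coneMonoid n)) := by
  intro e _
  have hq : p ^ e ≠ 0 := pow_ne_zero e (expChar_ne_zero k p)
  exact AddMonoidAlgebra.admitsSplitting_one p e ((coneMonoid n).nsmul_injective hq)
    fun _ _ _ ↦ (coneMonoid n).exists_eq_nsmul_of_nsmul_add_eq_nsmul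
      fun _ ↦ mem_coneMonoid_of_nsmul_mem n hq

/-- A normal toric ring over a perfect field of characteristic `p > 0` is F-pure. -/
theorem stmt_5 (p : ℕ) (hp : p.Prime) (k : Type*) [Field k] [CharP k p]
    [ExpChar k p] [PerfectRing k p]
    (d s : ℕ) (hd : 1 ≤ d) (n : Fin s → Fin d → ℤ) :
    ∀ e : ℕ, 1 ≤ e → AdmitsSplitting p e (1 : AddMonoidAlgebra k (coneMonoid n)) :=
  stmt_5_general p k d s n
end

section
/- Let k be a perfect field of characteristic p > 0, let A = k[[x_1, …, x_d]] be the formal power series ring in d ≥ 1 variables with maximal ideal m, and let f ∈ m^n ∖ m^{n+1} for some integer n ≥ 1 (i.e., f is nonzero of multiplicity n). If t is a rational number with 0 ≤ t ≤ 1/n, then f^{⌊t(p^e−1)⌋} ∉ m^{[p^e]} for every integer e ≥ 1; that is, the pair (A, t·div(f)) is F-pure. -/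
/-!
In `k[[x₁, …, x_d]]` the powers of the maximal ideal are exactly the ideals `{g | i ≤ order g}`,
and the order is additive on products since the power series ring is a domain. Hence `f` has
order `n`, and `f ^ a ∈ m^{[q]} ⊆ m ^ q` would force `q ≤ a * n`, whereas `a = ⌊t (q - 1)⌋`
satisfies `a * n ≤ q - 1`.
-/

namespace MvPowerSeries

variable {σ R : Type*}

theorem order_pow [CommSemiring R] [NoZeroDivisors R] [Nontrivial R]
    (f : MvPowerSeries σ R) (a : ℕ) : (f ^ a).order = a • f.order := by
  simpa using order_prod (fun _ ↦ f) (Finset.range a)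

section OrderIdeal

variable [CommSemiring R]

def orderIdeal (i : ℕ) : Ideal (MvPowerSeries σ R) where
  carrier := {g | (i : ℕ∞) ≤ g.order}
  add_mem' ha hb := (le_min ha hb).trans min_order_le_add
  zero_mem' := by simp
  smul_mem' c g hg := hg.trans (le_add_self.trans le_order_mul)

@[simp]
theorem mem_orderIdeal {i : ℕ} {g : MvPowerSeries σ R} :
    g ∈ orderIdeal i ↔ (i : ℕ∞) ≤ g.order := Iff.rfl

theorem orderIdeal_mul_le (i j : ℕ) :
    orderIdeal (σ := σ) (R := R) i * orderIdeal j ≤ orderIdeal (i + j) :=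
  Ideal.mul_le.mpr fun _ hf _ hg ↦ by
    rw [mem_orderIdeal, Nat.cast_add]
    exact (add_le_add hf hg).trans le_order_mul

theorem exists_sum_X_mul_of_le_order [Fintype σ] [LinearOrder σ] {i : ℕ}
    {g : MvPowerSeries σ R} (hg : ((i + 1 : ℕ) : ℕ∞) ≤ g.order) :
    ∃ h : σ → MvPowerSeries σ R, g = ∑ j, X j * h j ∧ ∀ j, (i : ℕ∞) ≤ (h j).order := by
  classical
  -- `h j` collects the monomials of `g` whose smallest variable is `j`, divided by `X j`.
  let h : σ → MvPowerSeries σ R := fun j δ ↦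
    if (δ + Finsupp.single j 1).support.min = (j : WithTop σ)
    then coeff (δ + Finsupp.single j 1) g else 0
  have hcoeff : ∀ j δ, coeff δ (h j) =
      if (δ + Finsupp.single j 1).support.min = (j : WithTop σ)
      then coeff (δ + Finsupp.single j 1) g else 0 := fun _ _ ↦ rfl
  refine ⟨h, ?_, fun j ↦ le_order fun δ hδ ↦ ?_⟩
  · ext δ
    have hX : ∀ j, coeff δ (X j * h j) =
        if δ.support.min = (j : WithTop σ) then coeff δ g else 0 := fun j ↦ by
      rw [X, coeff_monomial_mul, one_mul, hcoeff]
      by_cases hle : Finsupp.single j 1 ≤ δ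
      · rw [if_pos hle, tsub_add_cancel_of_le hle]
      · rw [if_neg hle, if_neg]
        exact fun hmin ↦ hle (Finsupp.single_le_iff.mpr (Nat.one_le_iff_ne_zero.mpr
          (Finsupp.mem_support_iff.mp (Finset.mem_of_min hmin))))
    rw [map_sum, Finset.sum_congr rfl fun j _ ↦ hX j]
    cases hmin : δ.support.min with
    | top =>
      rw [Finset.min_eq_top, Finsupp.support_eq_empty] at hmin
      subst hmin
      simpa using coeff_of_lt_order (f := g) (d := 0)
        ((Nat.cast_pos.mpr i.succ_pos).trans_le (by simpa using hg))
    | coe j₀ => simp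
  · rw [hcoeff]
    split_ifs
    · refine coeff_of_lt_order (lt_of_lt_of_le ?_ hg)
      rw [map_add, Finsupp.degree_single]
      exact_mod_cast Nat.succ_lt_succ (by exact_mod_cast hδ)
    · rfl

end OrderIdeal

variable {K : Type*} [Field K]

theorem maximalIdeal_eq_orderIdeal_one :
    IsLocalRing.maximalIdeal (MvPowerSeries σ K) = orderIdeal 1 := by
  ext g
  rw [mem_orderIdeal, Nat.cast_one, one_le_order_iff_constCoeff_eq_zero,
    IsLocalRing.mem_maximalIdeal, mem_nonunits_iff, isUnit_iff_constantCoeff, isUnit_iff_ne_zero,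
    not_not]

theorem maximalIdeal_pow_eq_orderIdeal [Finite σ] (i : ℕ) :
    IsLocalRing.maximalIdeal (MvPowerSeries σ K) ^ i = orderIdeal i := by
  have := Fintype.ofFinite σ
  let : LinearOrder σ := LinearOrder.lift' _ (Fintype.equivFin σ).injective
  induction i with
  | zero => ext; simp
  | succ i ih =>
    refine le_antisymm ?_ fun g hg ↦ ?_
    · rw [pow_succ, ih, maximalIdeal_eq_orderIdeal_one]
      exact orderIdeal_mul_le i 1
    · obtain ⟨h, rfl, hh⟩ := exists_sum_X_mul_of_le_order hg
      refine Ideal.sum_mem _ fun j _ ↦ ?_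
      rw [pow_succ']
      refine Ideal.mul_mem_mul ?_ (ih ▸ hh j)
      rw [maximalIdeal_eq_orderIdeal_one, mem_orderIdeal, Nat.cast_one,
        one_le_order_iff_constCoeff_eq_zero, constantCoeff_X]

end MvPowerSeries

open MvPowerSeries

/-- The `q`-th bracket (Frobenius) power `J^{[q]}` of an ideal. -/
def bracketPow {R : Type*} [CommRing R] (J : Ideal R) (q : ℕ) : Ideal R :=
  Ideal.span ((fun a => a ^ q) '' (J : Set R))

theorem bracketPow_le_pow {R : Type*} [CommRing R] (J : Ideal R) (q : ℕ) :
    bracketPow J q ≤ J ^ q :=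
  Ideal.span_le.mpr <| by
    rintro _ ⟨a, ha, rfl⟩
    exact Ideal.pow_mem_pow ha q

theorem natCast_mul_floor_mul_sub_one_lt {α : Type*} [Field α] [LinearOrder α]
    [IsStrictOrderedRing α] [FloorSemiring α] {n q : ℕ} {t : α} (hq : 0 < q) (ht0 : 0 ≤ t)
    (ht : t ≤ 1 / n) : n * ⌊t * ((q : α) - 1)⌋₊ < q := by
  have hq1 : (1 : α) ≤ q := by exact_mod_cast hq
  have hnt : (n : α) * t ≤ 1 := by
    rcases n.eq_zero_or_pos with rfl | hn
    · simp
    · rwa [le_div_iff₀' (by exact_mod_cast hn)] at ht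
  suffices ((n * ⌊t * ((q : α) - 1)⌋₊ : ℕ) : α) < q by exact_mod_cast this
  calc ((n * ⌊t * ((q : α) - 1)⌋₊ : ℕ) : α) ≤ n * (t * (q - 1)) := by
        push_cast
        gcongr
        exact Nat.floor_le (mul_nonneg ht0 (by linarith))
    _ = (n * t) * (q - 1) := by ring
    _ ≤ 1 * (q - 1) := by gcongr
    _ < q := by linarith

theorem stmt_13_general (p : ℕ) (hp : p.Prime) (k : Type*) [Field k]
    (d : ℕ) (n : ℕ)
    (f : MvPowerSeries (Fin d) k)
    (hf1 : f ∈ (IsLocalRing.maximalIdeal (MvPowerSeries (Fin d) k)) ^ n)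
    (hf2 : f ∉ (IsLocalRing.maximalIdeal (MvPowerSeries (Fin d) k)) ^ (n + 1))
    (t : ℚ) (ht0 : 0 ≤ t) (ht : t ≤ 1 / n) :
    ∀ e : ℕ, 1 ≤ e →
      f ^ ⌊t * ((p : ℚ) ^ e - 1)⌋₊ ∉
        bracketPow (IsLocalRing.maximalIdeal (MvPowerSeries (Fin d) k)) (p ^ e) := by
  intro e _ hmem
  set a := ⌊t * ((p : ℚ) ^ e - 1)⌋₊ with ha
  rw [maximalIdeal_pow_eq_orderIdeal, mem_orderIdeal] at hf1 hf2
  have hf : f.order = n := le_antisymm (not_lt.mp fun h ↦ hf2 (by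
    simpa using Order.add_one_le_of_lt h)) hf1
  have hord := bracketPow_le_pow _ _ hmem
  rw [maximalIdeal_pow_eq_orderIdeal, mem_orderIdeal, order_pow, hf, nsmul_eq_mul] at hord
  have hlt : n * a < p ^ e := by
    simpa [ha] using natCast_mul_floor_mul_sub_one_lt (pow_pos hp.pos e) ht0 ht
  have : p ^ e ≤ a * n := by exact_mod_cast hord
  lia

/-- For `f` of multiplicity `n` in `A = k[[x₁, …, x_d]]` and `0 ≤ t ≤ 1/n`, the pair
`(A, t·div f)` is F-pure: `f^⌊t(p^e−1)⌋ ∉ m^{[p^e]}` for every `e ≥ 1`. -/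
theorem stmt_13 (p : ℕ) (hp : p.Prime) (k : Type*) [Field k] [CharP k p]
    [ExpChar k p] [PerfectRing k p] (d : ℕ) (hd : 1 ≤ d) (n : ℕ) (hn : 1 ≤ n)
    (f : MvPowerSeries (Fin d) k)
    (hf1 : f ∈ (IsLocalRing.maximalIdeal (MvPowerSeries (Fin d) k)) ^ n)
    (hf2 : f ∉ (IsLocalRing.maximalIdeal (MvPowerSeries (Fin d) k)) ^ (n + 1))
    (t : ℚ) (ht0 : 0 ≤ t) (ht : t ≤ 1 / n) :
    ∀ e : ℕ, 1 ≤ e →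
      f ^ ⌊t * ((p : ℚ) ^ e - 1)⌋₊ ∉
        bracketPow (IsLocalRing.maximalIdeal (MvPowerSeries (Fin d) k)) (p ^ e) :=
  stmt_13_general p hp k d n f hf1 hf2 t ht0 ht
end

section
/- Let k be a perfect field of characteristic p > 0, let A = k[[x_1, …, x_d]] be the formal power series ring in d ≥ 1 variables with maximal ideal m, let f ∈ m^n ∖ m^{n+1} for some integer n ≥ 1, and let t ≥ 0 be a rational number. (1) If f^{⌊t(p^e−1)⌋} ∉ m^{[p^e]} for every integer e ≥ 1 (i.e., the pair (A, t·div(f)) is F-pure), then t ≤ d/n. (2) If for every nonzero c ∈ A there exists an integer e ≥ 1 such that c·f^{⌊t(p^e−1)⌋} ∉ m^{[p^e]} (i.e., the pair (A, t·div(f)) is strongly F-regular), then t < d/n. -/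
/-!
The bracket power `m^{[q]}` contains `(x₁^q, …, x_d^q)`, hence every power series of order
`> d (q - 1)`: a monomial with all exponents `< q` has degree `≤ d (q - 1)`. Since `f ^ M` has
order `≥ n M`, F-purity gives `n ⌊t (p^e - 1)⌋ ≤ d (p^e - 1)` for every `e`, and letting `e → ∞`
yields `t ≤ d / n`. For strong F-regularity, testing with `c = f` gives
`n (⌊t (p^e - 1)⌋ + 1) ≤ d (p^e - 1)` for a single `e`, which already forces `t < d / n`.
-/

open IsLocalRing

namespace MvPowerSeries

theorem mem_span_X_pow_of_coeff_eq_zero {σ R : Type*} [Fintype σ] [CommSemiring R] {q : ℕ}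
    {g : MvPowerSeries σ R} (hg : ∀ s : σ →₀ ℕ, (∀ i, s i < q) → coeff s g = 0) :
    g ∈ Ideal.span (Set.range fun i => (X i : MvPowerSeries σ R) ^ q) := by
  classical
  -- Split `g` according to a chosen index at which the exponent is `≥ q`; by `hg`, every
  -- monomial of `g` has one.
  let bigIndex (s : σ →₀ ℕ) : Option σ := if h : ∃ i, q ≤ s i then some h.choose else none
  let part (i : σ) : MvPowerSeries σ R := fun s => if bigIndex s = some i then coeff s g else 0
  have part_dvd : ∀ i, ∃ c, part i = c * X i ^ q := by
    intro i
    obtain ⟨c, hc⟩ : X i ^ q ∣ part i := by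
      refine X_pow_dvd_iff.mpr fun s hs => ?_
      change ite _ _ _ = 0
      refine if_neg fun hi => ?_
      by_cases h : ∃ j, q ≤ s j
      · simp only [bigIndex, h, dif_pos, Option.some.injEq] at hi
        exact hs.not_ge (hi ▸ h.choose_spec)
      · simp [bigIndex, h] at hi
    exact ⟨c, hc.trans (mul_comm _ _)⟩
  choose c hc using part_dvd
  refine Ideal.mem_span_range_iff_exists_fun.mpr ⟨c, ?_⟩
  rw [show ∑ i, c i * X i ^ q = ∑ i, part i from (Finset.sum_congr rfl fun i _ => hc i).symm]
  ext s
  rw [map_sum]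
  change ∑ i, (if bigIndex s = some i then coeff s g else 0) = coeff s g
  cases hs : bigIndex s with
  | none =>
    refine (Finset.sum_eq_zero fun _ _ => if_neg (by simp)).trans (hg s fun i => ?_).symm
    by_contra! h
    simp [bigIndex, dif_pos (⟨i, h⟩ : ∃ i, q ≤ s i)] at hs
  | some j => simp

variable {σ k : Type*} [Field k]

theorem mem_maximalIdeal_iff_constantCoeff_eq_zero {g : MvPowerSeries σ k} :
    g ∈ maximalIdeal (MvPowerSeries σ k) ↔ constantCoeff g = 0 := by
  rw [mem_maximalIdeal, mem_nonunits_iff, isUnit_iff_constantCoeff, isUnit_iff_ne_zero, not_not]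

theorem le_order_of_mem_maximalIdeal_pow {j : ℕ} {g : MvPowerSeries σ k}
    (hg : g ∈ maximalIdeal (MvPowerSeries σ k) ^ j) : (j : ℕ∞) ≤ g.order := by
  induction j generalizing g with
  | zero => simp
  | succ j ih =>
    rw [pow_succ] at hg
    refine Submodule.mul_induction_on hg (fun a ha b hb => ?_) (fun a b ha hb => ?_)
    · have hb' : 1 ≤ b.order := one_le_order_iff_constCoeff_eq_zero.mpr
        (mem_maximalIdeal_iff_constantCoeff_eq_zero.mp hb)
      push_cast
      exact (add_le_add (ih ha) hb').trans le_order_mul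
    · exact (le_min ha hb).trans min_order_le_add

theorem span_X_pow_le_bracketPow_maximalIdeal (q : ℕ) :
    Ideal.span (Set.range fun i => (X i : MvPowerSeries σ k) ^ q) ≤
      bracketPow (maximalIdeal (MvPowerSeries σ k)) q := by
  refine Ideal.span_mono ?_
  rintro _ ⟨i, rfl⟩
  exact ⟨X i, mem_maximalIdeal_iff_constantCoeff_eq_zero.mpr (constantCoeff_X i), rfl⟩

theorem le_card_mul_of_mem_pow_of_notMem_bracketPow [Fintype σ] {j q : ℕ}
    {g : MvPowerSeries σ k} (hg : g ∈ maximalIdeal (MvPowerSeries σ k) ^ j)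
    (hgq : g ∉ bracketPow (maximalIdeal (MvPowerSeries σ k)) q) :
    j ≤ Fintype.card σ * (q - 1) := by
  by_contra! hj
  refine hgq (span_X_pow_le_bracketPow_maximalIdeal q
    (mem_span_X_pow_of_coeff_eq_zero fun s hs => coeff_of_lt_order ?_))
  have hdeg : s.degree ≤ Fintype.card σ * (q - 1) := by
    rw [Finsupp.degree_eq_sum, ← smul_eq_mul, ← Finset.card_univ, ← Finset.sum_const]
    exact Finset.sum_le_sum fun i _ => Nat.le_sub_one_of_lt (hs i)
  exact (Nat.cast_lt.mpr (hdeg.trans_lt hj)).trans_le (le_order_of_mem_maximalIdeal_pow hg)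

end MvPowerSeries

section Floor

variable {K : Type*} [Field K] [LinearOrder K] [IsStrictOrderedRing K] [FloorSemiring K]

theorem mul_le_of_forall_exists_floor_mul_le [Archimedean K] {t : K} {n d : ℕ} (hn : 0 < n)
    (h : ∀ N : ℕ, ∃ Q : ℕ, N ≤ Q ∧ n * ⌊t * Q⌋₊ ≤ d * Q) : n * t ≤ d := by
  by_contra! hdt
  obtain ⟨N, hN⟩ := exists_nat_gt (n / (n * t - d))
  obtain ⟨Q, hNQ, hQ⟩ := h N
  have hfloor : (n : K) * (t * Q) < n * (⌊t * Q⌋₊ + 1) :=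
    mul_lt_mul_of_pos_left (Nat.lt_floor_add_one _) (by exact_mod_cast hn)
  have hQ' : (n : K) * ⌊t * Q⌋₊ ≤ d * Q := by exact_mod_cast hQ
  have hNQ' : (N : K) ≤ Q := by exact_mod_cast hNQ
  rw [div_lt_iff₀ (sub_pos.mpr hdt)] at hN
  nlinarith

theorem mul_lt_of_floor_mul_add_one_le {t : K} {n d Q : ℕ} (hn : 0 < n) (hQ : 0 < Q)
    (h : n * (⌊t * Q⌋₊ + 1) ≤ d * Q) : n * t < d := by
  have hn' : (0 : K) < n := by exact_mod_cast hn
  have hQ' : (0 : K) < Q := by exact_mod_cast hQ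
  have h' : (n : K) * (⌊t * Q⌋₊ + 1) ≤ d * Q := by exact_mod_cast h
  have hfloor : t * Q < ⌊t * Q⌋₊ + 1 := Nat.lt_floor_add_one _
  refine lt_of_mul_lt_mul_right ?_ hQ'.le
  nlinarith

end Floor

theorem stmt_14_general (p : ℕ) (hp : p.Prime) (k : Type*) [Field k] (d : ℕ) (n : ℕ) (hn : 1 ≤ n)
    (f : MvPowerSeries (Fin d) k)
    (hf1 : f ∈ (IsLocalRing.maximalIdeal (MvPowerSeries (Fin d) k)) ^ n)
    (hf2 : f ∉ (IsLocalRing.maximalIdeal (MvPowerSeries (Fin d) k)) ^ (n + 1))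
    (t : ℚ) :
    ((∀ e : ℕ, 1 ≤ e →
        f ^ ⌊t * ((p : ℚ) ^ e - 1)⌋₊ ∉
          bracketPow (IsLocalRing.maximalIdeal (MvPowerSeries (Fin d) k)) (p ^ e)) →
      t ≤ (d : ℚ) / n) ∧
    ((∀ c : MvPowerSeries (Fin d) k, c ≠ 0 →
        ∃ e : ℕ, 1 ≤ e ∧
          c * f ^ ⌊t * ((p : ℚ) ^ e - 1)⌋₊ ∉
            bracketPow (IsLocalRing.maximalIdeal (MvPowerSeries (Fin d) k)) (p ^ e)) →
      t < (d : ℚ) / n) := by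
  have hbound (e M : ℕ) (hM : f ^ M ∉ bracketPow (maximalIdeal _) (p ^ e)) :
      n * M ≤ d * (p ^ e - 1) := by
    have hfM : f ^ M ∈ maximalIdeal (MvPowerSeries (Fin d) k) ^ (n * M) := by
      rw [pow_mul]
      exact Ideal.pow_mem_pow hf1 M
    simpa only [Fintype.card_fin] using MvPowerSeries.le_card_mul_of_mem_pow_of_notMem_bracketPow hfM hM
  have hcast (e : ℕ) : ((p ^ e - 1 : ℕ) : ℚ) = (p : ℚ) ^ e - 1 := by
    rw [Nat.cast_sub (Nat.one_le_pow _ _ hp.pos), Nat.cast_pow, Nat.cast_one]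
  have hn' : (0 : ℚ) < n := by exact_mod_cast hn
  refine ⟨fun hpure => ?_, fun hregular => ?_⟩
  · rw [le_div_iff₀ hn', mul_comm]
    refine mul_le_of_forall_exists_floor_mul_le hn fun N => ⟨p ^ (N + 1) - 1, ?_, ?_⟩
    · have := Nat.lt_pow_self hp.one_lt (n := N + 1)
      omega
    · rw [hcast]
      exact hbound _ _ (hpure _ le_add_self)
  · obtain ⟨e, he, hnotMem⟩ := hregular f fun h0 => hf2 (h0 ▸ Ideal.zero_mem _)
    rw [lt_div_iff₀ hn', mul_comm]
    refine mul_lt_of_floor_mul_add_one_le hn (Q := p ^ e - 1) ?_ ?_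
    · have := Nat.one_lt_pow (Nat.one_le_iff_ne_zero.mp he) hp.one_lt
      omega
    · rw [hcast]
      exact hbound _ _ (by rw [pow_succ']; exact hnotMem)

/-- For `f` of multiplicity `n` in `A = k[[x₁, …, x_d]]`: if the pair `(A, t·div f)` is
F-pure then `t ≤ d/n`, and if it is strongly F-regular then `t < d/n`. -/
theorem stmt_14 (p : ℕ) (hp : p.Prime) (k : Type*) [Field k] [CharP k p]
    [ExpChar k p] [PerfectRing k p] (d : ℕ) (hd : 1 ≤ d) (n : ℕ) (hn : 1 ≤ n)
    (f : MvPowerSeries (Fin d) k)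
    (hf1 : f ∈ (IsLocalRing.maximalIdeal (MvPowerSeries (Fin d) k)) ^ n)
    (hf2 : f ∉ (IsLocalRing.maximalIdeal (MvPowerSeries (Fin d) k)) ^ (n + 1))
    (t : ℚ) (ht0 : 0 ≤ t) :
    ((∀ e : ℕ, 1 ≤ e →
        f ^ ⌊t * ((p : ℚ) ^ e - 1)⌋₊ ∉
          bracketPow (IsLocalRing.maximalIdeal (MvPowerSeries (Fin d) k)) (p ^ e)) →
      t ≤ (d : ℚ) / n) ∧
    ((∀ c : MvPowerSeries (Fin d) k, c ≠ 0 →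
        ∃ e : ℕ, 1 ≤ e ∧
          c * f ^ ⌊t * ((p : ℚ) ^ e - 1)⌋₊ ∉
            bracketPow (IsLocalRing.maximalIdeal (MvPowerSeries (Fin d) k)) (p ^ e)) →
      t < (d : ℚ) / n) :=
  stmt_14_general p hp k d n hn f hf1 hf2 t
end

section
/- Let k be a perfect field of characteristic p > 0, let A = k[[x_1, …, x_d]] be the formal power series ring in d ≥ 1 variables with maximal ideal m, and let f ∈ m^n ∖ m^{n+1} for some integer n ≥ 1. Let f_n be the initial form of f, i.e., its degree-n homogeneous component (a nonzero homogeneous polynomial of degree n). Let t be a rational number with 0 ≤ t < min{1, d/n}, and suppose there are positive integers m_1, …, m_d such that the ideal (x_1^{m_1}, …, x_d^{m_d}) of A is contained in the ideal J = (∂f_n/∂x_1, …, ∂f_n/∂x_d) generated by the partial derivatives of f_n. If p ≥ (m_1 + ⋯ + m_d)/(d − n·t), then f^{⌊t·p^e⌋} ∉ m^{[p^e]} for every integer e ≥ 1; that is, the pair (A, t·div(f)) is strongly F-pure. -/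
namespace MvPowerSeries

variable {σ R : Type*}

section CommSemiring

variable [CommSemiring R]

/-- Defined through coefficients; for finite `σ` this is the monomial ideal `(X i ^ q)ᵢ`. -/
def boxIdeal (σ R : Type*) [CommSemiring R] (q : ℕ) : Ideal (MvPowerSeries σ R) where
  carrier := {h | ∀ a : σ →₀ ℕ, (∀ i, a i < q) → coeff a h = 0}
  add_mem' hg hh a ha := by rw [map_add, hg a ha, hh a ha, add_zero]
  zero_mem' _ _ := map_zero _
  smul_mem' g h hh a ha := by
    classical
    rw [smul_eq_mul, coeff_mul]
    refine Finset.sum_eq_zero fun x hx => ?_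
    have hle : x.2 ≤ a := by
      rw [← Finset.HasAntidiagonal.mem_antidiagonal.1 hx]; exact le_add_self
    rw [hh x.2 fun i => (hle i).trans_lt (ha i), mul_zero]

variable {q : ℕ}

theorem mem_boxIdeal {h : MvPowerSeries σ R} :
    h ∈ boxIdeal σ R q ↔ ∀ a : σ →₀ ℕ, (∀ i, a i < q) → coeff a h = 0 :=
  Iff.rfl

theorem one_notMem_boxIdeal [Nontrivial R] (hq : 0 < q) :
    (1 : MvPowerSeries σ R) ∉ boxIdeal σ R q := fun h => by
  simpa using h 0 fun _ => hq

theorem homogeneousComponent_mem_boxIdeal {h : MvPowerSeries σ R} (hh : h ∈ boxIdeal σ R q)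
    (n : ℕ) : homogeneousComponent n h ∈ boxIdeal σ R q := fun a ha => by
  rw [coeff_homogeneousComponent, hh a ha, ite_self]

theorem add_single_apply_lt [DecidableEq σ] {b : σ →₀ ℕ} (hb : ∀ j, b j < q) {i : σ} {r : ℕ}
    (hi : b i + r < q) (j : σ) : (b + Finsupp.single i r) j < q := by
  by_cases hj : j = i
  · subst hj; simpa using hi
  · simpa [Finsupp.single_apply, Ne.symm hj] using hb j

theorem pderiv_mem_boxIdeal (hq : (q : R) = 0) {h : MvPowerSeries σ R}
    (hh : h ∈ boxIdeal σ R q) (i : σ) : pderiv R i h ∈ boxIdeal σ R q := by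
  classical
  intro a ha
  rw [coeff_pderiv]
  rcases (Nat.succ_le_of_lt (ha i)).lt_or_eq with hlt | heq
  · rw [hh _ (add_single_apply_lt ha hlt), zero_mul]
  · rw [← Nat.cast_succ, heq, hq, mul_zero]

theorem le_add_of_mul_X_pow_mem_boxIdeal {g : MvPowerSeries σ R} {b : σ →₀ ℕ}
    (hb : ∀ i, b i < q) (hgb : coeff b g ≠ 0) {i : σ} {r : ℕ}
    (h : g * X i ^ r ∈ boxIdeal σ R q) : q ≤ b i + r := by
  classical
  by_contra! hlt
  exact hgb (by simpa [X_pow_eq, coeff_mul_monomial] using h _ (add_single_apply_lt hb hlt))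

theorem homogeneousComponent_eq_coe {f : MvPowerSeries σ R} {fn : MvPolynomial σ R} {n : ℕ}
    (hfn : fn.IsHomogeneous n) (hcoeff : ∀ a : σ →₀ ℕ, a.degree = n → fn.coeff a = coeff a f) :
    homogeneousComponent n f = fn := by
  ext a
  rw [coeff_homogeneousComponent, MvPolynomial.coeff_coe]
  split_ifs with ha
  · exact (hcoeff a ha).symm
  · exact (hfn.coeff_eq_zero ha).symm

theorem isHomogeneous_one : IsHomogeneous (1 : MvPowerSeries σ R) 0 := fun {d} hd => by
  classical
  rw [coeff_one] at hd
  split_ifs at hd with h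
  · simp [h]
  · exact absurd rfl hd

theorem IsHomogeneous.pow {F : MvPowerSeries σ R} {n : ℕ} (hF : F.IsHomogeneous n) (N : ℕ) :
    (F ^ N).IsHomogeneous (n * N) := by
  induction N with
  | zero => exact isHomogeneous_one
  | succ N ih => rw [pow_succ, mul_add_one]; exact ih.mul hF

theorem homogeneousComponent_pow {f : MvPowerSeries σ R} {n : ℕ} (hf : n ≤ f.order) (N : ℕ) :
    homogeneousComponent (n * N) (f ^ N) = homogeneousComponent n f ^ N := by
  induction N with
  | zero =>
    exact (isHomogeneous_iff_eq_homogeneousComponent.1 isHomogeneous_one).symm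
  | succ N ih =>
    have hfN : ((n * N : ℕ) : ℕ∞) ≤ (f ^ N).order := by
      refine le_trans ?_ (le_order_pow N)
      rw [mul_comm, Nat.cast_mul, ← nsmul_eq_mul]
      exact nsmul_le_nsmul_right hf N
    rw [pow_succ, pow_succ, mul_add_one, homogeneousComponent_mul_of_le_order hfN hf, ih]

end CommSemiring

section ExpChar

variable [CommRing R] (p : ℕ) [ExpChar R p]

theorem pow_pow_mem_boxIdeal {g : MvPowerSeries σ R} (hg : constantCoeff g = 0) (e : ℕ) :
    g ^ p ^ e ∈ boxIdeal σ R (p ^ e) := by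
  intro a ha
  rw [← map_iterateFrobenius_expand p (expChar_ne_zero R p) g e, coeff_map]
  by_cases h0 : a = 0
  · rw [h0, coeff_zero_eq_constantCoeff, constantCoeff_expand, hg, map_zero]
  · obtain ⟨i, hi⟩ := Finsupp.ne_iff.1 h0
    rw [coeff_expand_of_not_dvd _ _ _ (Nat.not_dvd_of_pos_of_lt (Nat.pos_of_ne_zero hi) (ha i)),
      map_zero]

theorem mem_boxIdeal_of_pow_mem [IsReduced R] {g : MvPowerSeries σ R} {q : ℕ}
    (hg : g ^ p ∈ boxIdeal σ R (p * q)) : g ∈ boxIdeal σ R q := by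
  intro b hb
  have h := hg (p • b) fun i => by
    simpa using Nat.mul_lt_mul_of_pos_left (hb i) (expChar_pos R p)
  rw [← map_frobenius_expand p (expChar_ne_zero R p), coeff_map, coeff_expand_smul,
    frobenius_def] at h
  exact IsReduced.eq_zero _ ⟨p, h⟩

end ExpChar

section Field

variable {k : Type*} [Field k]

theorem constantCoeff_eq_zero_of_mem_maximalIdeal {g : MvPowerSeries σ k}
    (hg : g ∈ IsLocalRing.maximalIdeal (MvPowerSeries σ k)) : constantCoeff g = 0 := by
  by_contra h
  exact hg (isUnit_iff_constantCoeff.2 (isUnit_iff_ne_zero.2 h))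

theorem bracketPow_maximalIdeal_le_boxIdeal (p : ℕ) [ExpChar k p] (e : ℕ) :
    bracketPow (IsLocalRing.maximalIdeal (MvPowerSeries σ k)) (p ^ e) ≤
      boxIdeal σ k (p ^ e) := by
  rw [bracketPow, Ideal.span_le]
  rintro _ ⟨g, hg, rfl⟩
  exact pow_pow_mem_boxIdeal p (constantCoeff_eq_zero_of_mem_maximalIdeal hg) e

theorem le_order_of_mem_maximalIdeal_pow_s15 {f : MvPowerSeries σ k} {n : ℕ}
    (hf : f ∈ IsLocalRing.maximalIdeal (MvPowerSeries σ k) ^ n) : (n : ℕ∞) ≤ f.order := by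
  induction n generalizing f with
  | zero => simp
  | succ n ih =>
    rw [pow_succ] at hf
    refine Submodule.mul_induction_on hf (fun x hx y hy => ?_) (fun x y hx hy => ?_)
    · have hy : 1 ≤ y.order := one_le_order_iff_constCoeff_eq_zero.2
        (constantCoeff_eq_zero_of_mem_maximalIdeal hy)
      exact le_trans (by push_cast; exact add_le_add (ih hx) hy) le_order_mul
    · exact le_trans (le_min hx hy) min_order_le_add

end Field

section Bound

variable {k : Type*} [Field k] {F : MvPowerSeries σ k} {n : ℕ}

theorem pow_pred_mul_pderiv_mem_boxIdeal {q s : ℕ} (hq : (q : k) = 0) (hs : (s : k) ≠ 0)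
    (h : F ^ s ∈ boxIdeal σ k q) (j : σ) : F ^ (s - 1) * pderiv k j F ∈ boxIdeal σ k q := by
  have := (boxIdeal σ k q).mul_mem_left (C (s : k)⁻¹) (pderiv_mem_boxIdeal hq h j)
  rwa [pderiv_pow, ← mul_assoc, ← mul_assoc, ← map_natCast C, ← map_mul, inv_mul_cancel₀ hs,
    map_one, one_mul] at this

variable [Fintype σ] {m : σ → ℕ}

theorem card_mul_le_of_pow_succ_mem_boxIdeal (hF : F.IsHomogeneous n)
    (hJ : ∀ i, X i ^ m i ∈ Ideal.span (Set.range fun j => pderiv k j F)) {q s : ℕ}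
    (hq : (q : k) = 0) (hs : ((s + 1 : ℕ) : k) ≠ 0)
    (hmem : F ^ (s + 1) ∈ boxIdeal σ k q) (hnot : F ^ s ∉ boxIdeal σ k q) :
    Fintype.card σ * q ≤ n * s + ∑ i, m i := by
  obtain ⟨b, hb, hbF⟩ : ∃ b : σ →₀ ℕ, (∀ i, b i < q) ∧ coeff b (F ^ s) ≠ 0 := by
    simpa [mem_boxIdeal] using hnot
  have hdeg : b.degree = n * s := by
    rw [Finsupp.degree_eq_weight_one]; exact (hF.pow s) hbF
  have hcolon : Ideal.span (Set.range fun j => pderiv k j F) ≤ (boxIdeal σ k q).colon {F ^ s} :=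
    Ideal.span_le.2 <| Set.range_subset_iff.2 fun j => Submodule.mem_colon_singleton.2 <| by
      simpa [mul_comm] using pow_pred_mul_pderiv_mem_boxIdeal hq hs hmem j
  have hbm : ∀ i, q ≤ b i + m i := fun i =>
    le_add_of_mul_X_pow_mem_boxIdeal hb hbF <| by
      simpa [mul_comm] using Submodule.mem_colon_singleton.1 (hcolon (hJ i))
  calc Fintype.card σ * q = ∑ _i : σ, q := by simp
    _ ≤ ∑ i, (b i + m i) := Finset.sum_le_sum fun i _ => hbm i
    _ = n * s + ∑ i, m i := by rw [Finset.sum_add_distrib, ← Finsupp.degree_eq_sum, hdeg]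

theorem le_or_card_mul_le_of_pow_mem_boxIdeal {p : ℕ} (hp : p.Prime) [CharP k p]
    (hF : F.IsHomogeneous n)
    (hJ : ∀ i, X i ^ m i ∈ Ideal.span (Set.range fun j => pderiv k j F)) (e s : ℕ)
    (hs : F ^ s ∈ boxIdeal σ k (p ^ e)) :
    p ^ e ≤ s ∨ p * (Fintype.card σ * p ^ e + n) ≤ p * n * s + p ^ e * ∑ i, m i := by
  have : Fact p.Prime := ⟨hp⟩
  induction e generalizing s with
  | zero =>
    refine .inl (Nat.one_le_iff_ne_zero.2 ?_)
    rintro rfl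
    exact one_notMem_boxIdeal one_pos (by simpa using hs)
  | succ e ihe =>
    induction s with
    | zero => exact absurd (pow_zero F ▸ hs) (one_notMem_boxIdeal (pow_pos hp.pos _))
    | succ s ihs =>
      by_cases hprev : F ^ s ∈ boxIdeal σ k (p ^ (e + 1))
      · rcases ihs hprev with h | h
        · exact .inl (h.trans s.le_succ)
        · exact .inr (h.trans (by gcongr; omega))
      by_cases hdvd : p ∣ s + 1
      · obtain ⟨u, hu⟩ := hdvd
        have hu' : F ^ u ∈ boxIdeal σ k (p ^ e) :=
          mem_boxIdeal_of_pow_mem p (by rwa [← pow_mul, mul_comm u, ← hu, ← pow_succ'])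
        rw [hu]
        rcases ihe u hu' with h | h
        · exact .inl (by rw [pow_succ']; gcongr)
        · refine .inr ?_
          calc p * (Fintype.card σ * p ^ (e + 1) + n)
              ≤ p * (p * (Fintype.card σ * p ^ e + n)) := Nat.mul_le_mul_left p <| by
                rw [pow_succ]; linarith [Nat.le_mul_of_pos_left n hp.pos]
            _ ≤ p * (p * n * u + p ^ e * ∑ i, m i) := Nat.mul_le_mul_left p h
            _ = p * n * (p * u) + p ^ (e + 1) * ∑ i, m i := by ring
      · have hcard := card_mul_le_of_pow_succ_mem_boxIdeal hF hJ (q := p ^ (e + 1))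
          (by simp [CharP.cast_eq_zero]) ((CharP.cast_eq_zero_iff k p _).not.2 hdvd) hs hprev
        refine .inr ?_
        calc p * (Fintype.card σ * p ^ (e + 1) + n) ≤ p * (n * (s + 1) + ∑ i, m i) :=
              Nat.mul_le_mul_left p (by rw [mul_add_one]; omega)
          _ ≤ p * n * (s + 1) + p ^ (e + 1) * ∑ i, m i := by
              rw [mul_add, ← mul_assoc]; gcongr; exact le_self_pow₀ hp.one_le (by omega)

end Bound

end MvPowerSeries

theorem mul_floor_add_pow_mul_lt {p n d S e : ℕ} {t : ℚ} (hp : 0 < p) (hn : 0 < n) (ht0 : 0 ≤ t)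
    (htdn : t < d / n) (hS : (S : ℚ) / (d - n * t) ≤ p) :
    p * n * ⌊t * (p : ℚ) ^ e⌋₊ + p ^ e * S < p * (d * p ^ e + n) := by
  have hnt : n * t < d := by rwa [lt_div_iff₀ (by exact_mod_cast hn), mul_comm] at htdn
  have hS' : (S : ℚ) ≤ p * (d - n * t) := (div_le_iff₀ (sub_pos.2 hnt)).1 hS
  have hN : (⌊t * (p : ℚ) ^ e⌋₊ : ℚ) ≤ t * p ^ e := Nat.floor_le (by positivity)
  have hp' : (0 : ℚ) < p := by exact_mod_cast hp
  have hn' : (0 : ℚ) < n := by exact_mod_cast hn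
  qify
  nlinarith [mul_le_mul_of_nonneg_left hN (by positivity : (0 : ℚ) ≤ p * n),
    mul_le_mul_of_nonneg_left hS' (by positivity : (0 : ℚ) ≤ p ^ e), mul_pos hp' hn']

theorem stmt_15_general (p : ℕ) (hp : p.Prime) (k : Type*) [Field k] [CharP k p]
    [ExpChar k p] (d : ℕ) (n : ℕ) (hn : 1 ≤ n)
    (f : MvPowerSeries (Fin d) k)
    (hf1 : f ∈ (IsLocalRing.maximalIdeal (MvPowerSeries (Fin d) k)) ^ n)
    (fn : MvPolynomial (Fin d) k) (hfnhom : fn.IsHomogeneous n)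
    (hfncoeff : ∀ m : Fin d →₀ ℕ, (m.sum fun _ e => e) = n →
      MvPolynomial.coeff m fn = MvPowerSeries.coeff m f)
    (t : ℚ) (ht0 : 0 ≤ t) (ht1 : t < 1) (htdn : t < (d : ℚ) / n)
    (m' : Fin d → ℕ)
    (hJ : Ideal.span (Set.range fun i : Fin d => (MvPowerSeries.X i : MvPowerSeries (Fin d) k) ^ m' i) ≤
      Ideal.span (Set.range fun i : Fin d =>
        (MvPolynomial.coeToMvPowerSeries.ringHom (MvPolynomial.pderiv i fn) :
          MvPowerSeries (Fin d) k)))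
    (hpbound : (∑ i, (m' i : ℚ)) / ((d : ℚ) - n * t) ≤ (p : ℚ)) :
    ∀ e : ℕ, 1 ≤ e →
      f ^ ⌊t * (p : ℚ) ^ e⌋₊ ∉
        bracketPow (IsLocalRing.maximalIdeal (MvPowerSeries (Fin d) k)) (p ^ e) := by
  intro e _ hmem
  set F := MvPowerSeries.homogeneousComponent n f
  have hF : F = fn := MvPowerSeries.homogeneousComponent_eq_coe hfnhom hfncoeff
  have hJF : ∀ i, MvPowerSeries.X i ^ m' i ∈
      Ideal.span (Set.range fun j => MvPowerSeries.pderiv k j F) := fun i => by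
    simpa only [hF, MvPowerSeries.pderiv_coe, MvPolynomial.coeToMvPowerSeries.ringHom_apply]
      using hJ (Ideal.subset_span ⟨i, rfl⟩)
  have hFN : F ^ ⌊t * (p : ℚ) ^ e⌋₊ ∈ MvPowerSeries.boxIdeal (Fin d) k (p ^ e) := by
    rw [← MvPowerSeries.homogeneousComponent_pow
      (MvPowerSeries.le_order_of_mem_maximalIdeal_pow_s15 hf1)]
    exact MvPowerSeries.homogeneousComponent_mem_boxIdeal
      (MvPowerSeries.bracketPow_maximalIdeal_le_boxIdeal p e hmem) _
  rcases MvPowerSeries.le_or_card_mul_le_of_pow_mem_boxIdeal hp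
    (MvPowerSeries.isHomogeneous_homogeneousComponent f n) hJF e _ hFN with h | h
  · refine h.not_gt ((Nat.floor_lt (by positivity)).2 ?_)
    exact_mod_cast mul_lt_of_lt_one_left (pow_pos (Nat.cast_pos.2 hp.pos : (0 : ℚ) < p) e) ht1
  · rw [Fintype.card_fin] at h
    exact h.not_gt (mul_floor_add_pow_mul_lt hp.pos hn ht0 htdn (by exact_mod_cast hpbound))

/-- Suppose `f ∈ k[[x₁, …, x_d]]` has multiplicity `n`, its initial form `fn` (the degree-`n`
homogeneous component) satisfies `(x₁^{m₁}, …, x_d^{m_d}) ⊆ (∂fn/∂x₁, …, ∂fn/∂x_d)`, and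
`0 ≤ t < min {1, d/n}`.  If `p ≥ (m₁ + ⋯ + m_d)/(d − n·t)`, then `f^⌊t·p^e⌋ ∉ m^{[p^e]}`
for every `e ≥ 1`, i.e. the pair `(A, t·div f)` is strongly F-pure. -/
theorem stmt_15 (p : ℕ) (hp : p.Prime) (k : Type*) [Field k] [CharP k p]
    [ExpChar k p] [PerfectRing k p] (d : ℕ) (hd : 1 ≤ d) (n : ℕ) (hn : 1 ≤ n)
    (f : MvPowerSeries (Fin d) k)
    (hf1 : f ∈ (IsLocalRing.maximalIdeal (MvPowerSeries (Fin d) k)) ^ n)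
    (hf2 : f ∉ (IsLocalRing.maximalIdeal (MvPowerSeries (Fin d) k)) ^ (n + 1))
    (fn : MvPolynomial (Fin d) k) (hfn0 : fn ≠ 0) (hfnhom : fn.IsHomogeneous n)
    (hfncoeff : ∀ m : Fin d →₀ ℕ, (m.sum fun _ e => e) = n →
      MvPolynomial.coeff m fn = MvPowerSeries.coeff m f)
    (t : ℚ) (ht0 : 0 ≤ t) (ht1 : t < 1) (htdn : t < (d : ℚ) / n)
    (m' : Fin d → ℕ) (hm' : ∀ i, 1 ≤ m' i)
    (hJ : Ideal.span (Set.range fun i : Fin d => (MvPowerSeries.X i : MvPowerSeries (Fin d) k) ^ m' i) ≤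
      Ideal.span (Set.range fun i : Fin d =>
        (MvPolynomial.coeToMvPowerSeries.ringHom (MvPolynomial.pderiv i fn) :
          MvPowerSeries (Fin d) k)))
    (hpbound : (∑ i, (m' i : ℚ)) / ((d : ℚ) - n * t) ≤ (p : ℚ)) :
    ∀ e : ℕ, 1 ≤ e →
      f ^ ⌊t * (p : ℚ) ^ e⌋₊ ∉
        bracketPow (IsLocalRing.maximalIdeal (MvPowerSeries (Fin d) k)) (p ^ e) :=
  stmt_15_general p hp k d n hn f hf1 fn hfnhom hfncoeff t ht0 ht1 htdn m' hJ hpbound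
end

section
/- Let p be a prime, let (A, m) be an F-finite Noetherian normal local integral domain of characteristic p, and let x ∈ m be a nonzero element. If the pair (A, div(x)) is divisorially F-regular — i.e., for every c ∈ A not contained in any minimal prime ideal over xA there exists an integer e ≥ 1 such that c·x^{p^e−1} admits a p^e-splitting in A — then the quotient ring B = A/xA is strongly F-regular: for every c ∈ A not contained in any minimal prime ideal over xA there exists an integer e ≥ 1 such that the image of c in B admits a p^e-splitting in B. -/
/-- If the pair `(A, div x)` is divisorially F-regular, then `B = A/xA` is strongly
F-regular. -/
theorem stmt_18 (p : ℕ) (hp : p.Prime) (A : Type*) [CommRing A] [IsDomain A]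
    [IsLocalRing A] [IsNoetherianRing A] [IsIntegrallyClosed A] [CharP A p]
    (hFF : FFinite p A) (x : A) (hx : x ≠ 0) (hxm : x ∈ IsLocalRing.maximalIdeal A)
    (hDFR : ∀ c : A, (∀ P ∈ (Ideal.span {x}).minimalPrimes, c ∉ P) →
      ∃ e : ℕ, 1 ≤ e ∧ AdmitsSplitting p e (c * x ^ (p ^ e - 1))) :
    ∀ c : A, (∀ P ∈ (Ideal.span {x}).minimalPrimes, c ∉ P) →
      ∃ e : ℕ, 1 ≤ e ∧
        AdmitsSplitting p e (Ideal.Quotient.mk (Ideal.span {x}) c) := by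
  intro c hc
  obtain ⟨e, he, φ, hφ, hφc⟩ := hDFR c hc
  refine ⟨e, he, ?_⟩
  set I := Ideal.span {x} with hI
  set mk := Ideal.Quotient.mk I with hmk
  set k := p ^ e - 1 with hk
  have hpe : p ^ e = k + 1 := (Nat.succ_pred_eq_of_pos (pow_pos hp.pos e)).symm
  -- key well-definedness lemma
  have key : ∀ a a' : A, mk a = mk a' → mk (φ (a * x ^ k)) = mk (φ (a' * x ^ k)) := by
    intro a a' h
    rw [Ideal.Quotient.eq] at h ⊢
    rw [hI, Ideal.mem_span_singleton] at h
    obtain ⟨t, ht⟩ := h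
    have h1 : a * x ^ k - a' * x ^ k = x ^ p ^ e * t := by
      rw [← sub_mul, ht, hpe]; ring
    rw [← map_sub, h1, hφ x t, hI, Ideal.mem_span_singleton]
    exact Dvd.intro _ rfl
  set σ : A ⧸ I → A := Function.surjInv Ideal.Quotient.mk_surjective with hσ
  have hσmk : ∀ b : A ⧸ I, mk (σ b) = b := fun b =>
    Function.surjInv_eq Ideal.Quotient.mk_surjective b
  refine ⟨{ toFun := fun b => mk (φ (σ b * x ^ k)),
            map_zero' := ?_, map_add' := ?_ }, ?_, ?_⟩
  · have : mk (σ (0 : A ⧸ I)) = mk (0 : A) := by rw [hσmk, map_zero]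
    show mk (φ (σ (0 : A ⧸ I) * x ^ k)) = 0
    rw [key _ _ this]; simp
  · intro b b'
    have : mk (σ (b + b')) = mk (σ b + σ b') := by
      rw [hσmk, map_add, hσmk, hσmk]
    show mk (φ (σ (b + b') * x ^ k)) = mk (φ (σ b * x ^ k)) + mk (φ (σ b' * x ^ k))
    rw [key _ _ this, add_mul, map_add, map_add]
  · intro a b
    obtain ⟨a₀, rfl⟩ := Ideal.Quotient.mk_surjective a
    obtain ⟨b₀, rfl⟩ := Ideal.Quotient.mk_surjective b
    show mk (φ (σ (mk a₀ ^ p ^ e * mk b₀) * x ^ k)) = mk a₀ * mk (φ (σ (mk b₀) * x ^ k))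
    have h1 : mk (σ (mk a₀ ^ p ^ e * mk b₀)) = mk (a₀ ^ p ^ e * b₀) := by
      rw [hσmk, map_mul, map_pow]
    have h2 : mk (σ (mk b₀)) = mk b₀ := hσmk _
    rw [key _ _ h1, key _ _ h2, mul_assoc, hφ a₀ (b₀ * x ^ k), map_mul]
  · show mk (φ (σ (mk c) * x ^ k)) = 1
    rw [key _ _ (hσmk (mk c)), hφc, map_one]
end
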